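/- arXiv:2302.03121 — 3 statements merged into one kernel-verified Lean document; each statement's English description precedes it below -/
import Mathlib

section
/- Let G and H be finite abelian groups and F : G → H perfect nonlinear. If some α ∈ H satisfies |F⁻¹(α)| = |G|/|H| + √|G| − √|G|/|H|, then |F⁻¹(β)| = |G|/|H| − √|G|/|H| for every β ≠ α. -/
/-!
Write `N b = |F⁻¹(b)|`. Counting pairs `(x, x + a)` with `F (x + a) = F x` gives
`∑ N b ^ 2 = ∑ₐ #{x | F (x + a) = F x}`, and perfect nonlinearity makes every term with
`a ≠ 0` equal to `|G| / |H|`. Together with `∑ N b = |G|` this says that the deviations from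
`c = (|G| - √|G|) / |H|` satisfy `∑ (N b - c) ^ 2 = |G|`. The hypothesis on `α` is exactly
`(N α - c) ^ 2 = |G|`, so all other deviations vanish.
-/

open Finset

section Fibers

variable {G H : Type*} [Fintype G] [DecidableEq H]

theorem sum_sq_card_fiber_eq_sum_card_collision [AddGroup G] [Fintype H] (F : G → H) :
    ∑ b, #{x | F x = b} ^ 2 = ∑ a, #{x | F (x + a) = F x} :=
  calc ∑ b, #{x | F x = b} ^ 2 = ∑ x, #{y | F y = F x} := by
        rw [← sum_fiberwise univ F]
        refine sum_congr rfl fun b _ => ?_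
        rw [sum_congr rfl fun x hx => by rw [(mem_filter.mp hx).2], sum_const, smul_eq_mul, sq]
    _ = ∑ x, #{a | F (x + a) = F x} :=
        sum_congr rfl fun x _ => (card_equiv (Equiv.addLeft x) (by simp)).symm
    _ = ∑ a, #{x | F (x + a) = F x} := by
        simp only [card_filter]
        exact sum_comm

variable [AddGroup G] [AddGroup H] [Fintype H]

def IsPerfectNonlinear (F : G → H) : Prop :=
  ∀ a : G, a ≠ 0 → ∀ b : H, #{x | F (x + a) - F x = b} * Fintype.card H = Fintype.card G

-- `|H| ∑ N b ^ 2 = |G| |H| + (|G| - 1) |G|`, rearranged to avoid truncated subtraction.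
theorem IsPerfectNonlinear.sum_sq_card_fiber {F : G → H} (hF : IsPerfectNonlinear F) :
    (∑ b, #{x | F x = b} ^ 2) * Fintype.card H + Fintype.card G
      = Fintype.card G * Fintype.card H + Fintype.card G ^ 2 := by
  classical
  have h0 : #{x | F (x + 0) = F x} = Fintype.card G := by simp
  have hne : ∀ a ∈ univ.erase 0, #{x | F (x + a) = F x} * Fintype.card H = Fintype.card G :=
    fun a ha => by simpa only [sub_eq_zero] using hF a (ne_of_mem_erase ha) 0
  rw [sum_sq_card_fiber_eq_sum_card_collision, sum_mul, ← add_sum_erase _ _ (mem_univ 0), h0,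
    sum_congr rfl hne, add_assoc, sum_erase_add _ _ (mem_univ 0), sum_const, card_univ,
    smul_eq_mul, sq]

end Fibers

theorem sum_sq_sub_eq_of_sum_sq {ι : Type*} [Fintype ι] [Nonempty ι] {x : ι → ℝ} {n : ℝ}
    (hn : 0 ≤ n) (hsum : ∑ i, x i = n)
    (hsq : (∑ i, x i ^ 2) * Fintype.card ι + n = n * Fintype.card ι + n ^ 2) :
    ∑ i, (x i - (n / Fintype.card ι - √n / Fintype.card ι)) ^ 2 = n := by
  set m : ℝ := (Fintype.card ι : ℝ)
  have hm : m ≠ 0 := by positivity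
  have hexpand : ∑ i, (x i - (n / m - √n / m)) ^ 2
      = ∑ i, x i ^ 2 - 2 * (n / m - √n / m) * ∑ i, x i + m * (n / m - √n / m) ^ 2 := by
    simp only [sub_sq, sum_add_distrib, sum_sub_distrib, ← sum_mul, ← mul_sum, sum_const,
      card_univ, nsmul_eq_mul]
    ring
  rw [hexpand, hsum]
  field_simp
  nlinarith [Real.sq_sqrt hn]

theorem eq_zero_of_sum_eq_of_nonneg {ι M : Type*} [Fintype ι] [AddCommMonoid M] [PartialOrder M]
    [IsOrderedCancelAddMonoid M] {f : ι → M} (hf : ∀ i, 0 ≤ f i) {i j : ι}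
    (hsum : ∑ k, f k = f i) (hji : j ≠ i) : f j = 0 := by
  classical
  rw [← add_sum_erase _ _ (mem_univ i), add_eq_left] at hsum
  exact (sum_eq_zero_iff_of_nonneg fun k _ => hf k).mp hsum j (mem_erase.mpr ⟨hji, mem_univ j⟩)

/-- If a preimage attains the maximal possible size, all other preimages are uniform. -/
theorem preimage_uniform_of_max_preimage
    {G H : Type*} [AddCommGroup G] [Fintype G]
    [AddCommGroup H] [Fintype H] [DecidableEq H] (F : G → H)
    (hPN : ∀ a : G, a ≠ 0 → ∀ b : H,
      (Finset.univ.filter fun x => F (x + a) - F x = b).card * Fintype.card H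
        = Fintype.card G)
    (α : H)
    (hα : ((Finset.univ.filter fun x => F x = α).card : ℝ)
        = (Fintype.card G : ℝ) / (Fintype.card H : ℝ) + Real.sqrt (Fintype.card G)
          - Real.sqrt (Fintype.card G) / (Fintype.card H : ℝ)) :
    ∀ β : H, β ≠ α →
      ((Finset.univ.filter fun x => F x = β).card : ℝ)
        = (Fintype.card G : ℝ) / (Fintype.card H : ℝ)
          - Real.sqrt (Fintype.card G) / (Fintype.card H : ℝ) := by
  intro β hβ
  set n : ℝ := (Fintype.card G : ℝ)
  set c : ℝ := n / Fintype.card H - √n / Fintype.card H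
  have hsum : ∑ b, (#{x | F x = b} : ℝ) = n := by
    rw [← Nat.cast_sum, ← card_eq_sum_card_fiberwise fun x _ => mem_univ (F x), card_univ]
  have hsq : (∑ b, (#{x | F x = b} : ℝ) ^ 2) * Fintype.card H + n
      = n * Fintype.card H + n ^ 2 := by
    simp only [n]
    exact_mod_cast IsPerfectNonlinear.sum_sq_card_fiber hPN
  have hdev : ∑ b, ((#{x | F x = b} : ℝ) - c) ^ 2 = n :=
    sum_sq_sub_eq_of_sum_sq (Nat.cast_nonneg _) hsum hsq
  have hdevα : ((#{x | F x = α} : ℝ) - c) ^ 2 = n := by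
    rw [hα, show n / Fintype.card H + √n - √n / Fintype.card H - c = √n by ring,
      Real.sq_sqrt (Nat.cast_nonneg _)]
  have hdevβ := eq_zero_of_sum_eq_of_nonneg (fun _ => sq_nonneg _) (hdev.trans hdevα.symm) hβ
  exact sub_eq_zero.mp (pow_eq_zero_iff two_ne_zero |>.mp hdevβ)
end

section
/- Let p be an odd prime and F : 𝔽_{p^n} → 𝔽_{p^n} be a planar function. Then |Im(F)| ≤ p^n − (√(4p^n − 3) − 1)/2. -/
/-!
Count the collisions `F x = F y`. Grouped by the difference `y - x = a`, the diagonal gives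
`q` of them and planarity gives one for each `a ≠ 0`, so there are at least `2q - 1`. Grouped by
the common value, they number `∑ m_b ²` over the fibre sizes `m_b ≥ 1` of the `k` image points;
with `d = q - k = ∑ (m_b - 1)` this is at most `d² + 2d + k`. Hence `q ≤ d² + d + 1`, i.e.
`d ≥ (√(4q - 3) - 1) / 2`.
-/

open Finset

theorem Finset.sum_sq_le_of_one_le {ι : Type*} (s : Finset ι) (m : ι → ℕ)
    (hm : ∀ i ∈ s, 1 ≤ m i) :
    ∑ i ∈ s, m i ^ 2 ≤ (∑ i ∈ s, m i - #s) ^ 2 + (∑ i ∈ s, m i - #s) + ∑ i ∈ s, m i := by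
  set d := ∑ i ∈ s, (m i - 1)
  have hsum : ∑ i ∈ s, m i = d + #s := by
    rw [card_eq_sum_ones, ← sum_add_distrib]
    exact sum_congr rfl fun i hi => by have := hm i hi; omega
  have hsq : ∑ i ∈ s, m i ^ 2 = ∑ i ∈ s, (m i - 1) ^ 2 + 2 * d + #s := by
    rw [mul_sum, card_eq_sum_ones, ← sum_add_distrib, ← sum_add_distrib]
    refine sum_congr rfl fun i hi => ?_
    obtain ⟨j, hj⟩ := Nat.exists_eq_add_of_le' (hm i hi)
    rw [hj, Nat.add_sub_cancel]
    ring
  have hd : ∑ i ∈ s, (m i - 1) ^ 2 ≤ d ^ 2 :=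
    sum_sq_le_sq_sum_of_nonneg fun i _ => Nat.zero_le _
  rw [hsum, Nat.add_sub_cancel, hsq]
  omega

section Fibers

variable {α β : Type*} [Fintype α] [DecidableEq β]

theorem card_collisions_eq_sum_card_fiber_sq (f : α → β) :
    #{xy : α × α | f xy.1 = f xy.2} = ∑ b ∈ univ.image f, #{x | f x = b} ^ 2 := by
  rw [card_eq_sum_card_fiberwise (f := fun xy : α × α => f xy.1) (t := univ.image f)
    fun xy _ => mem_image_of_mem f (mem_univ xy.1)]
  refine sum_congr rfl fun b _ => ?_
  rw [sq, ← card_product]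
  congr 1
  ext ⟨x, y⟩
  simp only [mem_filter, mem_univ, true_and, mem_product]
  constructor
  · rintro ⟨hxy, rfl⟩
    exact ⟨rfl, hxy.symm⟩
  · rintro ⟨rfl, hy⟩
    exact ⟨hy.symm, rfl⟩

theorem card_collisions_le (f : α → β) :
    #{xy : α × α | f xy.1 = f xy.2} ≤
      (Fintype.card α - #(univ.image f)) ^ 2 + (Fintype.card α - #(univ.image f)) +
        Fintype.card α := by
  have hfiber : ∀ b ∈ univ.image f, 1 ≤ #{x | f x = b} := fun b hb => by
    obtain ⟨x, -, rfl⟩ := mem_image.mp hb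
    exact card_pos.mpr ⟨x, mem_filter.mpr ⟨mem_univ x, rfl⟩⟩
  have hsum : ∑ b ∈ univ.image f, #{x | f x = b} = Fintype.card α := by
    rw [← card_univ, card_eq_sum_card_image f univ]
  rw [card_collisions_eq_sum_card_fiber_sq]
  simpa only [hsum] using sum_sq_le_of_one_le _ _ hfiber

end Fibers

section Planar

variable {G β : Type*} [AddGroup G] [Fintype G] [DecidableEq β]

theorem card_collisions_eq_sum_card_add_eq (f : G → β) :
    #{xy : G × G | f xy.1 = f xy.2} = ∑ a, #{x | f (x + a) = f x} := by
  simp only [card_filter, Fintype.sum_prod_type]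
  refine (sum_congr rfl fun x _ => ?_).trans sum_comm
  exact Fintype.sum_equiv (Equiv.addLeft x).symm _ _ fun y => by simp [eq_comm]

theorem two_mul_card_le_card_collisions_add_one (f : G → β)
    (hf : ∀ a ≠ 0, ∃ x, f (x + a) = f x) :
    2 * Fintype.card G ≤ #{xy : G × G | f xy.1 = f xy.2} + 1 := by
  classical
  have hne : ∀ a ∈ univ.erase (0 : G), 1 ≤ #{x | f (x + a) = f x} := fun a ha => by
    obtain ⟨x, hx⟩ := hf a (ne_of_mem_erase ha)
    exact card_pos.mpr ⟨x, mem_filter.mpr ⟨mem_univ x, hx⟩⟩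
  have hoff := sum_le_sum hne
  rw [card_collisions_eq_sum_card_add_eq, ← add_sum_erase _ _ (mem_univ 0)]
  simp only [add_zero, filter_true_of_mem fun _ _ => trivial, card_univ] at hoff ⊢
  rw [sum_const, card_erase_of_mem (mem_univ _), card_univ, smul_eq_mul, mul_one] at hoff
  omega

theorem card_le_sq_add_self_add_one_of_forall_exists_add_eq (f : G → β)
    (hf : ∀ a ≠ 0, ∃ x, f (x + a) = f x) :
    Fintype.card G ≤
      (Fintype.card G - #(univ.image f)) ^ 2 + (Fintype.card G - #(univ.image f)) + 1 := by
  have hlower := two_mul_card_le_card_collisions_add_one f hf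
  have hupper := card_collisions_le f
  omega

end Planar

theorem sqrt_four_mul_sub_three_sub_one_div_two_le {q d : ℕ} (h : q ≤ d ^ 2 + d + 1) :
    (√(4 * q - 3) - 1) / 2 ≤ d := by
  have hq : (q : ℝ) ≤ d ^ 2 + d + 1 := by exact_mod_cast h
  have : √(4 * q - 3) ≤ 2 * d + 1 := Real.sqrt_le_iff.mpr ⟨by positivity, by nlinarith⟩
  linarith

theorem planar_image_card_upper_bound_general
    (p n : ℕ) [Fact p.Prime] (hn : 0 < n)
    [Fintype (GaloisField p n)] [DecidableEq (GaloisField p n)]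
    (F : GaloisField p n → GaloisField p n)
    (hF : ∀ a : GaloisField p n, a ≠ 0 →
      Function.Bijective (fun x => F (x + a) - F x)) :
    ((Finset.univ.image F).card : ℝ)
      ≤ (p : ℝ) ^ n - (Real.sqrt (4 * (p : ℝ) ^ n - 3) - 1) / 2 := by
  have hcard : Fintype.card (GaloisField p n) = p ^ n := by
    rw [← Nat.card_eq_fintype_card, GaloisField.card p n hn.ne']
  have hzero : ∀ a ≠ 0, ∃ x, F (x + a) = F x := fun a ha => by
    obtain ⟨x, hx⟩ := (hF a ha).surjective 0
    exact ⟨x, sub_eq_zero.mp hx⟩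
  have hbound := sqrt_four_mul_sub_three_sub_one_div_two_le
    (card_le_sq_add_self_add_one_of_forall_exists_add_eq F hzero)
  have himage : #(univ.image F) ≤ Fintype.card (GaloisField p n) := card_le_univ _
  rw [Nat.cast_sub himage, hcard] at hbound
  push_cast at hbound
  linarith

/-- Upper bound on the image set size of a planar function. -/
theorem planar_image_card_upper_bound
    (p n : ℕ) [Fact p.Prime] (hp : Odd p) (hn : 0 < n)
    [Fintype (GaloisField p n)] [DecidableEq (GaloisField p n)]
    (F : GaloisField p n → GaloisField p n)
    (hF : ∀ a : GaloisField p n, a ≠ 0 →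
      Function.Bijective (fun x => F (x + a) - F x)) :
    ((Finset.univ.image F).card : ℝ)
      ≤ (p : ℝ) ^ n - (Real.sqrt (4 * (p : ℝ) ^ n - 3) - 1) / 2 :=
  planar_image_card_upper_bound_general p n hn F hF
end

section
/- Let F₁ : 𝔽_p^n → 𝔽_p^m and F₂ : 𝔽_p^k → 𝔽_p^m be functions, both almost balanced of type (−), i.e., there exist a₁ with |F₁⁻¹(a₁)| = p^{n−m} − p^{n/2} + p^{n/2−m} and |F₁⁻¹(a)| = p^{n−m} + p^{n/2−m} for all a ≠ a₁, and similarly a₂ for F₂ (with k in place of n). Then the direct sum F(x,y) = F₁(x) + F₂(y) satisfies |F⁻¹(a₁ + a₂)| = p^{n+k−m} + p^{(n+k)/2} − p^{(n+k)/2−m}. -/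
/-!
By the convolution formula, `|F⁻¹(a₁ + a₂)|` is the diagonal term `|F₁⁻¹(a₁)| |F₂⁻¹(a₂)|` plus
`p^m - 1` equal terms `(p^{n-m} + p^{n/2-m}) (p^{k-m} + p^{k/2-m})`, because `a ≠ a₁` forces
`a₁ + a₂ - a ≠ a₂`. Writing `n/2 = m + e` and `k/2 = m + f`, the total is a polynomial identity
in `p`.
-/

open Finset

theorem card_filter_add_eq_sum_mul {α β G : Type*} [Fintype α] [Fintype β] [AddCommGroup G]
    [Fintype G] [DecidableEq G] (f : α → G) (g : β → G) (c : G) :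
    #{z : α × β | f z.1 + g z.2 = c} = ∑ a : G, #{x | f x = a} * #{y | g y = c - a} := by
  have fibre_of_left (x : α) : #{y | g y = c - f x} = #{y : β | f x + g y = c} := by
    congr 1; ext y; simp [eq_sub_iff_add_eq, add_comm]
  calc #{z : α × β | f z.1 + g z.2 = c}
      = ∑ x : α, #{y | g y = c - f x} := by
        simp only [card_filter, Fintype.sum_prod_type, fibre_of_left]
    _ = ∑ a : G, ∑ x ∈ {x | f x = a}, #{y | g y = c - f x} :=
        (sum_fiberwise univ f _).symm
    _ = ∑ a : G, #{x | f x = a} * #{y | g y = c - a} := by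
        refine sum_congr rfl fun a _ => ?_
        rw [sum_congr rfl fun x hx => by rw [(mem_filter.1 hx).2], sum_const, smul_eq_mul]

theorem sum_mul_apply_sub_of_eq_off {G R : Type*} [AddCommGroup G] [Fintype G] [DecidableEq G]
    [CommRing R] (u v : G → R) (a₁ a₂ : G) (U V : R)
    (hu : ∀ a, a ≠ a₁ → u a = U) (hv : ∀ b, b ≠ a₂ → v b = V) :
    ∑ a : G, u a * v (a₁ + a₂ - a) = u a₁ * v a₂ + ((Fintype.card G : R) - 1) * (U * V) := by
  have off_diagonal : ∀ a ∈ univ.erase a₁, u a * v (a₁ + a₂ - a) = U * V := by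
    intro a ha
    have ha₁ : a ≠ a₁ := ne_of_mem_erase ha
    have ha₂ : a₁ + a₂ - a ≠ a₂ := fun h => ha₁ <| by
      rw [sub_eq_iff_eq_add, add_comm a₂ a] at h
      exact (add_right_cancel h).symm
    rw [hu a ha₁, hv _ ha₂]
  rw [← sum_erase_add _ _ (mem_univ a₁), sum_congr rfl off_diagonal, sum_const,
    card_erase_of_mem (mem_univ a₁), card_univ, nsmul_eq_mul,
    Nat.cast_sub Fintype.card_pos, add_sub_cancel_left]
  push_cast
  ring

theorem minus_minus_count_identity {R : Type*} [CommRing R] (q : R) {n k m : ℕ}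
    (hn : Even n) (hk : Even k) (hmn : m ≤ n / 2) (hmk : m ≤ k / 2) :
    (q ^ (n - m) - q ^ (n / 2) + q ^ (n / 2 - m)) * (q ^ (k - m) - q ^ (k / 2) + q ^ (k / 2 - m))
      + (q ^ m - 1) * ((q ^ (n - m) + q ^ (n / 2 - m)) * (q ^ (k - m) + q ^ (k / 2 - m)))
      = q ^ (n + k - m) + q ^ ((n + k) / 2) - q ^ ((n + k) / 2 - m) := by
  obtain ⟨n', hn'⟩ := hn
  obtain ⟨k', hk'⟩ := hk
  obtain ⟨e, he⟩ : ∃ e, n / 2 = m + e := ⟨n / 2 - m, by omega⟩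
  obtain ⟨f, hf⟩ : ∃ f, k / 2 = m + f := ⟨k / 2 - m, by omega⟩
  have h₁ : n - m = m + e + e := by omega
  have h₂ : k - m = m + f + f := by omega
  have h₃ : n + k - m = m + m + m + e + e + f + f := by omega
  have h₄ : (n + k) / 2 = m + m + e + f := by omega
  rw [h₁, h₂, h₃, h₄, he, hf, Nat.add_sub_cancel_left, Nat.add_sub_cancel_left,
    show m + m + e + f - m = m + e + f by omega]
  ring

/-- The direct sum of two almost balanced functions of type (−) has the unique
preimage size of type (+). -/
theorem direct_sum_minus_minus
    (p n k m : ℕ) [Fact p.Prime]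
    (hn : Even n) (hk : Even k) (hmn : m ≤ n / 2) (hmk : m ≤ k / 2)
    (F₁ : (Fin n → ZMod p) → (Fin m → ZMod p))
    (F₂ : (Fin k → ZMod p) → (Fin m → ZMod p))
    (a₁ a₂ : Fin m → ZMod p)
    (h₁u : ((Finset.univ.filter fun x => F₁ x = a₁).card : ℤ)
        = p ^ (n - m) - p ^ (n / 2) + p ^ (n / 2 - m))
    (h₁ : ∀ a : Fin m → ZMod p, a ≠ a₁ →
      ((Finset.univ.filter fun x => F₁ x = a).card : ℤ)
        = p ^ (n - m) + p ^ (n / 2 - m))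
    (h₂u : ((Finset.univ.filter fun y => F₂ y = a₂).card : ℤ)
        = p ^ (k - m) - p ^ (k / 2) + p ^ (k / 2 - m))
    (h₂ : ∀ a : Fin m → ZMod p, a ≠ a₂ →
      ((Finset.univ.filter fun y => F₂ y = a).card : ℤ)
        = p ^ (k - m) + p ^ (k / 2 - m)) :
    ((Finset.univ.filter fun z : (Fin n → ZMod p) × (Fin k → ZMod p) =>
        F₁ z.1 + F₂ z.2 = a₁ + a₂).card : ℤ)
      = p ^ (n + k - m) + p ^ ((n + k) / 2) - p ^ ((n + k) / 2 - m) := by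
  have card_codomain : (Fintype.card (Fin m → ZMod p) : ℤ) = (p : ℤ) ^ m := by
    simp [ZMod.card]
  rw [card_filter_add_eq_sum_mul, Nat.cast_sum]
  simp only [Nat.cast_mul]
  rw [sum_mul_apply_sub_of_eq_off (fun a => (#{x | F₁ x = a} : ℤ))
      (fun b => (#{y | F₂ y = b} : ℤ)) a₁ a₂ _ _ h₁ h₂, h₁u, h₂u, card_codomain]
  exact minus_minus_count_identity (p : ℤ) hn hk hmn hmk
end
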